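/- arXiv:2205.02158 — 3 statements merged into one kernel-verified Lean document; each statement's English description precedes it below -/
import Mathlib

section
/- For a framed weak f-structure (f, Q, ξ_i, η^i) on a smooth manifold M of dimension 2n+p, the following identities hold: f ξ_i = 0 and η^i ∘ f = 0 for all 1 ≤ i ≤ p, and Q ∘ f = f ∘ Q (i.e., the tensors Q and f commute). -/
/-!
An algebraic model of a framed weak `f`-structure `(f, Q, ξ_i, η^i)` on a smooth
manifold `M^{2n+p}` (Rovenski–Wolak): `F` plays the role of the commutative ring
`C^∞(M)` of smooth functions and `V` the `F`-module `𝔛(M)` of smooth vector fields.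
The data are a `(1,1)`-tensor field `f` of rank `2n`, a nonsingular `(1,1)`-tensor
field `Q`, vector fields `ξ_1, …, ξ_p` spanning `ker f`, and the dual `1`-forms
`η^1, …, η^p`, satisfying `f³ + f∘Q = 0`, `Q ξᵢ = ξᵢ`, `f² = -Q + Σᵢ ηⁱ ⊗ ξᵢ`
and `ηⁱ(ξⱼ) = δⁱⱼ`.
-/

structure FramedWeakFStructure (p : ℕ) (F V : Type*) [CommRing F]
    [AddCommGroup V] [Module F V] where
  f : V →ₗ[F] V
  Q : V →ₗ[F] V
  ξ : Fin p → V
  η : Fin p → V →ₗ[F] F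
  Q_nonsingular : Function.Bijective Q
  f_cubed : ∀ X, f (f (f X)) + f (Q X) = 0
  Q_xi : ∀ i, Q (ξ i) = ξ i
  f_squared : ∀ X, f (f X) = -Q X + ∑ i, η i X • ξ i
  eta_xi : ∀ i j, η i (ξ j) = if i = j then (1 : F) else 0
  /-- the `ηⁱ` are the coframe dual to the `ξᵢ` w.r.t. the splitting
  `TM = f(TM) ⊕ ker f`. -/
  eta_Q : ∀ i X, η i (Q X) = η i X
  /-- the `ξᵢ` span `ker f` -/
  ker_f_spanned : ∀ X, f X = 0 → X ∈ Submodule.span F (Set.range ξ)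

/-! Applying `f` to `f² = -Q + Σ ηⁱ ⊗ ξᵢ` and comparing with `f³ = -f∘Q` gives `Σ ηⁱ(X) f ξᵢ = 0`,
and `X = ξⱼ` isolates `f ξⱼ = 0`. Applying `ηʲ` to the formula for `f²` itself and using `ηʲ ∘ Q = ηʲ` gives
`ηʲ ∘ f² = 0`, hence `ηʲ ∘ f ∘ Q = -ηʲ ∘ f³ = 0`, and `ηʲ ∘ f = 0` because `Q` is onto. Then
`f² (f X) = -Q (f X)` while also `f³ X = -f (Q X)`. -/

namespace FramedWeakFStructure

variable {p : ℕ} {F V : Type*} [CommRing F] [AddCommGroup V] [Module F V]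
  (S : FramedWeakFStructure p F V)

theorem f_f_f (X : V) : S.f (S.f (S.f X)) = -S.f (S.Q X) :=
  eq_neg_of_add_eq_zero_left (S.f_cubed X)

theorem eta_sum_smul_xi (j : Fin p) (c : Fin p → F) : S.η j (∑ i, c i • S.ξ i) = c j := by
  simp [S.eta_xi, mul_ite]

theorem sum_eta_smul_f_xi (X : V) : ∑ i, S.η i X • S.f (S.ξ i) = 0 := by
  have h := congrArg S.f (S.f_squared X)
  simp only [map_add, map_neg, map_sum, map_smul, f_f_f] at h
  exact left_eq_add.mp h

theorem f_xi (i : Fin p) : S.f (S.ξ i) = 0 := by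
  simpa [S.eta_xi, ite_smul] using S.sum_eta_smul_f_xi (S.ξ i)

theorem eta_f_f (j : Fin p) (X : V) : S.η j (S.f (S.f X)) = 0 := by
  rw [S.f_squared, map_add, map_neg, S.eta_Q, eta_sum_smul_xi, neg_add_cancel]

theorem eta_f_Q (j : Fin p) (X : V) : S.η j (S.f (S.Q X)) = 0 := by
  rw [← neg_eq_zero, ← map_neg, ← f_f_f, eta_f_f]

theorem eta_f (j : Fin p) (X : V) : S.η j (S.f X) = 0 := by
  obtain ⟨Y, rfl⟩ := S.Q_nonsingular.surjective X
  exact S.eta_f_Q j Y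

theorem Q_f (X : V) : S.Q (S.f X) = S.f (S.Q X) := by
  have h := S.f_squared (S.f X)
  simp only [eta_f, zero_smul, Finset.sum_const_zero, add_zero, f_f_f] at h
  exact (neg_injective h).symm

end FramedWeakFStructure

/-- For a framed weak `f`-structure `(f, Q, ξᵢ, ηⁱ)` on `M^{2n+p}`:
`f ξᵢ = 0` and `ηⁱ ∘ f = 0` for all `1 ≤ i ≤ p`, and `Q ∘ f = f ∘ Q`. -/
theorem framedWeakFStructure_identities {p : ℕ} {F V : Type*} [CommRing F]
    [AddCommGroup V] [Module F V] (S : FramedWeakFStructure p F V) :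
    (∀ i : Fin p, S.f (S.ξ i) = 0) ∧
    (∀ (i : Fin p) (X : V), S.η i (S.f X) = 0) ∧
    (∀ X : V, S.Q (S.f X) = S.f (S.Q X)) :=
  ⟨S.f_xi, S.eta_f, S.Q_f⟩
end

section
/- For a metric weak f-structure (f, Q, ξ_i, η^i, g), the tensor f is skew-symmetric and the tensor Q is self-adjoint with respect to g: g(fX, Y) = −g(X, fY) and g(QX, Y) = g(X, QY) for all vector fields X, Y. -/
/-!
An algebraic model of the calculus of smooth vector fields on a smooth manifold
`M^{2n+p}`: `F` plays the role of the ordered commutative `ℝ`-algebra `C^∞(M)` of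
smooth real-valued functions, and `V` the `F`-module `𝔛(M)` of smooth vector fields,
equipped with the derivation action `D` of vector fields on functions, the Lie
bracket of vector fields, a Riemannian metric `g` (a symmetric, `F`-bilinear,
positive-definite form) and its Levi-Civita connection `nabla` (the unique metric,
torsion-free affine connection of `g`).
-/

noncomputable section

structure RiemannCalculus (F V : Type*) [CommRing F] [PartialOrder F] [IsOrderedRing F] [Algebra ℝ F]
    [AddCommGroup V] [Module F V] where
  /-- the derivation action `X φ` of a vector field `X` on a function `φ` -/
  D : V → F → F
  D_add_left : ∀ X Y φ, D (X + Y) φ = D X φ + D Y φ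
  D_smul_left : ∀ (ψ : F) (X : V) (φ : F), D (ψ • X) φ = ψ * D X φ
  D_add_right : ∀ (X : V) (φ ψ : F), D X (φ + ψ) = D X φ + D X ψ
  D_mul_right : ∀ (X : V) (φ ψ : F), D X (φ * ψ) = φ * D X ψ + ψ * D X φ
  D_algebraMap : ∀ (X : V) (r : ℝ), D X (algebraMap ℝ F r) = 0
  /-- the Lie bracket `[X, Y]` of vector fields -/
  bracket : V → V → V
  bracket_add_left : ∀ X Y Z, bracket (X + Y) Z = bracket X Z + bracket Y Z
  bracket_antisymm : ∀ X Y, bracket X Y = -bracket Y X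
  bracket_leibniz : ∀ (X : V) (φ : F) (Y : V),
    bracket X (φ • Y) = φ • bracket X Y + D X φ • Y
  bracket_jacobi : ∀ X Y Z,
    bracket X (bracket Y Z) = bracket (bracket X Y) Z + bracket Y (bracket X Z)
  D_bracket : ∀ X Y φ, D (bracket X Y) φ = D X (D Y φ) - D Y (D X φ)
  /-- the Riemannian metric `g` -/
  g : V → V → F
  g_symm : ∀ X Y, g X Y = g Y X
  g_add_left : ∀ X Y Z, g (X + Y) Z = g X Z + g Y Z
  g_smul_left : ∀ (φ : F) (X Y : V), g (φ • X) Y = φ * g X Y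
  g_nonneg : ∀ X, 0 ≤ g X X
  g_definite : ∀ X, g X X = 0 → X = 0
  /-- the Levi-Civita connection `∇` of `g` -/
  nabla : V → V → V
  nabla_add_left : ∀ X Y Z, nabla (X + Y) Z = nabla X Z + nabla Y Z
  nabla_smul_left : ∀ (φ : F) (X Y : V), nabla (φ • X) Y = φ • nabla X Y
  nabla_add_right : ∀ X Y Z, nabla X (Y + Z) = nabla X Y + nabla X Z
  nabla_leibniz : ∀ (X : V) (φ : F) (Y : V),
    nabla X (φ • Y) = φ • nabla X Y + D X φ • Y
  nabla_metric : ∀ X Y Z, D X (g Y Z) = g (nabla X Y) Z + g Y (nabla X Z)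
  nabla_torsion_free : ∀ X Y, nabla X Y - nabla Y X = bracket X Y

/-- A metric weak `f`-structure `(f, Q, ξ_i, η^i, g)` on a smooth manifold `M^{2n+p}`
(Rovenski–Wolak): `f` is a `(1,1)`-tensor field of rank `2n`, `Q` a nonsingular
`(1,1)`-tensor field, `ξ_1, …, ξ_p` vector fields spanning `ker f`, and `η^1, …, η^p`
the dual `1`-forms, satisfying `f³ + f∘Q = 0`, `Q ξᵢ = ξᵢ`,
`f² = -Q + Σᵢ ηⁱ ⊗ ξᵢ`, `ηⁱ(ξⱼ) = δⁱⱼ`, together with a compatible Riemannian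
metric: `g(fX, fY) = g(X, QY) - Σᵢ ηⁱ(X) ηⁱ(QY)`. -/
structure MetricWeakFStructure (p : ℕ) (F V : Type*) [CommRing F] [PartialOrder F] [IsOrderedRing F] [Algebra ℝ F]
    [AddCommGroup V] [Module F V] extends RiemannCalculus F V where
  f : V →ₗ[F] V
  Q : V →ₗ[F] V
  ξ : Fin p → V
  η : Fin p → V →ₗ[F] F
  Q_nonsingular : Function.Bijective Q
  f_cubed : ∀ X, f (f (f X)) + f (Q X) = 0
  Q_xi : ∀ i, Q (ξ i) = ξ i
  f_squared : ∀ X, f (f X) = -Q X + ∑ i, η i X • ξ i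
  eta_xi : ∀ i j, η i (ξ j) = if i = j then (1 : F) else 0
  /-- the `ηⁱ` are the coframe dual to the `ξᵢ` w.r.t. the splitting
  `TM = f(TM) ⊕ ker f` (equivalently, `ηⁱ ∘ f = 0`). -/
  eta_Q : ∀ i X, η i (Q X) = η i X
  /-- the `ξᵢ` span `ker f` -/
  ker_f_spanned : ∀ X, f X = 0 → X ∈ Submodule.span F (Set.range ξ)
  compatible : ∀ X Y, g (f X) (f Y) = g X (Q Y) - ∑ i, η i X * η i (Q Y)

namespace MetricWeakFStructure

variable {p : ℕ} {F V : Type*} [CommRing F] [PartialOrder F] [IsOrderedRing F] [Algebra ℝ F]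
  [AddCommGroup V] [Module F V] (S : MetricWeakFStructure p F V)

/-- the fundamental 2-form `Φ(X,Y) = g(X, fY)` -/
def Phi (X Y : V) : F := S.g X (S.f Y)

/-- `dηⁱ(X,Y) = (1/2){X(ηⁱ(Y)) - Y(ηⁱ(X)) - ηⁱ([X,Y])}` -/
def dEta (i : Fin p) (X Y : V) : F :=
  algebraMap ℝ F (1 / 2) *
    (S.D X (S.η i Y) - S.D Y (S.η i X) - S.η i (S.bracket X Y))

/-- `dΦ(X,Y,Z) = (1/3){XΦ(Y,Z) + YΦ(Z,X) + ZΦ(X,Y) - Φ([X,Y],Z) - Φ([Z,X],Y) - Φ([Y,Z],X)}` -/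
def dPhi (X Y Z : V) : F :=
  algebraMap ℝ F (1 / 3) *
    (S.D X (S.Phi Y Z) + S.D Y (S.Phi Z X) + S.D Z (S.Phi X Y)
      - S.Phi (S.bracket X Y) Z - S.Phi (S.bracket Z X) Y - S.Phi (S.bracket Y Z) X)

/-- the Nijenhuis torsion `[f,f](X,Y) = f²[X,Y] + [fX,fY] - f[fX,Y] - f[X,fY]` -/
def nijenhuis (X Y : V) : V :=
  S.f (S.f (S.bracket X Y)) + S.bracket (S.f X) (S.f Y)
    - S.f (S.bracket (S.f X) Y) - S.f (S.bracket X (S.f Y))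

/-- `N⁽¹⁾ = [f,f] + 2 Σᵢ dηⁱ ⊗ ξᵢ` -/
def N1 (X Y : V) : V := S.nijenhuis X Y + ∑ i, (2 * S.dEta i X Y) • S.ξ i

/-- the Lie derivative of `f`: `(£_Z f)X = [Z, fX] - f[Z,X]` -/
def lieD_f (Z X : V) : V := S.bracket Z (S.f X) - S.f (S.bracket Z X)

/-- the Lie derivative of `ηʲ`: `(£_Z ηʲ)X = Z(ηʲ(X)) - ηʲ([Z,X])` -/
def lieD_eta (j : Fin p) (Z X : V) : F := S.D Z (S.η j X) - S.η j (S.bracket Z X)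

/-- the Lie derivative of `g`: `(£_Z g)(X,Y) = Z(g(X,Y)) - g([Z,X],Y) - g(X,[Z,Y])` -/
def lieD_g (Z X Y : V) : F :=
  S.D Z (S.g X Y) - S.g (S.bracket Z X) Y - S.g X (S.bracket Z Y)

/-- `N⁽²⁾ᵢ(X,Y) = (£_{fX} ηⁱ)Y - (£_{fY} ηⁱ)X` -/
def N2 (i : Fin p) (X Y : V) : F := S.lieD_eta i (S.f X) Y - S.lieD_eta i (S.f Y) X

/-- `N⁽³⁾ᵢ = £_{ξᵢ} f` -/
def N3 (i : Fin p) (X : V) : V := S.lieD_f (S.ξ i) X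

/-- `N⁽⁴⁾ᵢⱼ = £_{ξᵢ} ηʲ` -/
def N4 (i j : Fin p) (X : V) : F := S.lieD_eta j (S.ξ i) X

/-- `Q̃ = Q - id` -/
def Qt (X : V) : V := S.Q X - X

/-- `X^⊤ = X - Σᵢ ηⁱ(X) ξᵢ`, the `f(TM)`-component of `X` -/
def top (X : V) : V := X - ∑ i, S.η i X • S.ξ i

/-- `N⁽⁵⁾(X,Y,Z) = (fZ)(g(X^⊤,Q̃Y)) - (fY)(g(X^⊤,Q̃Z)) + g([X,fZ]^⊤,Q̃Y)
  - g([X,fY]^⊤,Q̃Z) + g([Y,fZ]^⊤ - [Z,fY]^⊤ - f[Y,Z], Q̃X)` -/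
def N5 (X Y Z : V) : F :=
  S.D (S.f Z) (S.g (S.top X) (S.Qt Y)) - S.D (S.f Y) (S.g (S.top X) (S.Qt Z))
    + S.g (S.top (S.bracket X (S.f Z))) (S.Qt Y)
    - S.g (S.top (S.bracket X (S.f Y))) (S.Qt Z)
    + S.g (S.top (S.bracket Y (S.f Z)) - S.top (S.bracket Z (S.f Y))
        - S.f (S.bracket Y Z)) (S.Qt X)

/-- the covariant derivative of `f`: `(∇_X f)Y = ∇_X(fY) - f(∇_X Y)` -/
def nablaF (X Y : V) : V := S.nabla X (S.f Y) - S.f (S.nabla X Y)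

/-- `hᵢ = (1/2) £_{ξᵢ} f` -/
def hT (i : Fin p) (X : V) : V := algebraMap ℝ F (1 / 2) • S.N3 i X

/-- a vector field `Z` is Killing if `£_Z g = 0` -/
def IsKilling (Z : V) : Prop := ∀ X Y : V, S.lieD_g Z X Y = 0

/-- the structure is normal if `N⁽¹⁾ = 0` -/
def Normal : Prop := ∀ X Y : V, S.N1 X Y = 0

/-- a weak K-structure: normal with `dΦ = 0` -/
def WeakK : Prop := S.Normal ∧ ∀ X Y Z : V, S.dPhi X Y Z = 0

/-- a weak almost S-structure: `dηⁱ = Φ` for all `i` -/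
def WeakAlmostS : Prop := ∀ (i : Fin p) (X Y : V), S.dEta i X Y = S.Phi X Y

/-- a weak S-structure: a weak K-structure with `dηⁱ = Φ` for all `i` -/
def WeakS : Prop := S.WeakK ∧ S.WeakAlmostS

/-- a weak almost C-structure: `dΦ = 0` and `dηⁱ = 0` for all `i` -/
def WeakAlmostC : Prop :=
  (∀ X Y Z : V, S.dPhi X Y Z = 0) ∧ ∀ (i : Fin p) (X Y : V), S.dEta i X Y = 0

/-- a weak C-structure: a weak K-structure with `dηⁱ = 0` for all `i` -/
def WeakC : Prop := S.WeakK ∧ ∀ (i : Fin p) (X Y : V), S.dEta i X Y = 0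

end MetricWeakFStructure

open MetricWeakFStructure

section Aux

variable {p : ℕ} {F V : Type*} [CommRing F] [PartialOrder F] [IsOrderedRing F] [Algebra ℝ F]
  [AddCommGroup V] [Module F V] (S : MetricWeakFStructure p F V)

lemma aux_g_zero_left (X : V) : S.g 0 X = 0 := by
  have h := S.g_smul_left 0 0 X
  rwa [zero_smul, zero_mul] at h

lemma aux_g_zero_right (X : V) : S.g X 0 = 0 := by
  rw [S.g_symm]; exact aux_g_zero_left S X

lemma aux_g_neg_left (X Y : V) : S.g (-X) Y = -S.g X Y := by
  have h := S.g_smul_left (-1) X Y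
  rwa [neg_one_smul, neg_one_mul] at h

lemma aux_g_smul_right (φ : F) (X Y : V) : S.g X (φ • Y) = φ * S.g X Y := by
  rw [S.g_symm, S.g_smul_left, S.g_symm]

lemma aux_g_add_right (X Y Z : V) : S.g X (Y + Z) = S.g X Y + S.g X Z := by
  rw [S.g_symm, S.g_add_left, S.g_symm Y, S.g_symm Z]

lemma aux_eta_ff (j : Fin p) (X : V) : S.η j (S.f (S.f X)) = 0 := by
  rw [S.f_squared]
  simp [S.eta_Q, S.eta_xi, eq_comm]

lemma aux_eta_f (j : Fin p) (X : V) : S.η j (S.f X) = 0 := by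
  obtain ⟨Z, rfl⟩ := S.Q_nonsingular.2 X
  have h : S.f (S.Q Z) = -(S.f (S.f (S.f Z))) :=
    (neg_eq_of_add_eq_zero_right (S.f_cubed Z)).symm
  rw [h, map_neg, aux_eta_ff, neg_zero]

lemma aux_span_repr (v : V) (hv : v ∈ Submodule.span F (Set.range S.ξ)) :
    v = ∑ i, S.η i v • S.ξ i := by
  set L : V →ₗ[F] V := ∑ i, (S.η i).smulRight (S.ξ i) with hL
  have hLv : ∀ w, L w = ∑ i, S.η i w • S.ξ i := by
    intro w; simp [hL, LinearMap.sum_apply]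
  have : v ∈ LinearMap.eqLocus L LinearMap.id := by
    refine Submodule.span_le.2 ?_ hv
    rintro _ ⟨j, rfl⟩
    show L (S.ξ j) = S.ξ j
    rw [hLv]
    simp [S.eta_xi, eq_comm, ite_smul]
  have hv' : L v = v := this
  rw [← hLv]; exact hv'.symm

lemma aux_f_xi (i : Fin p) : S.f (S.ξ i) = 0 := by
  have h2 : S.f (S.f (S.ξ i)) = 0 := by
    rw [S.f_squared, S.Q_xi]
    have : ∑ j, S.η j (S.ξ i) • S.ξ j = S.ξ i := by
      simp [S.eta_xi, eq_comm, ite_smul]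
    rw [this]; abel
  have hrepr := aux_span_repr S _ (S.ker_f_spanned _ h2)
  simpa [aux_eta_f] using hrepr

lemma aux_g_xi (i : Fin p) (X : V) : S.g X (S.ξ i) = S.η i X := by
  have h := S.compatible X (S.ξ i)
  rw [aux_f_xi, aux_g_zero_right, S.Q_xi] at h
  have hsum : ∑ j, S.η j X * S.η j (S.ξ i) = S.η i X := by
    simp [S.eta_xi, eq_comm]
  rw [hsum] at h
  linear_combination -h

lemma aux_Q_selfadj (X Y : V) : S.g (S.Q X) Y = S.g X (S.Q Y) := by
  have h1 := S.compatible X Y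
  have h2 := S.compatible Y X
  rw [S.g_symm (S.f Y) (S.f X)] at h2
  have h3 : S.g X (S.Q Y) - ∑ i, S.η i X * S.η i (S.Q Y)
      = S.g Y (S.Q X) - ∑ i, S.η i Y * S.η i (S.Q X) := h1.symm.trans h2
  simp only [S.eta_Q] at h3
  have hsum : ∑ i, S.η i X * S.η i Y = ∑ i, S.η i Y * S.η i X :=
    Finset.sum_congr rfl fun i _ => mul_comm _ _
  have : S.g X (S.Q Y) = S.g Y (S.Q X) := by linear_combination h3 + hsum
  rw [S.g_symm (S.Q X) Y]; exact this.symm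

lemma aux_fQ_comm (X : V) : S.f (S.Q X) = S.Q (S.f X) := by
  have h : S.f (S.Q X) = -(S.f (S.f (S.f X))) :=
    (neg_eq_of_add_eq_zero_right (S.f_cubed X)).symm
  rw [h, S.f_squared (S.f X)]
  simp [aux_eta_f]

end Aux

/-- For a metric weak `f`-structure `(f, Q, ξᵢ, ηⁱ, g)`, the tensor
`f` is skew-symmetric and the tensor `Q` is self-adjoint with respect to `g`:
`g(fX, Y) = -g(X, fY)` and `g(QX, Y) = g(X, QY)` for all vector fields `X, Y`. -/
theorem statement_1 {p : ℕ} {F V : Type*} [CommRing F] [PartialOrder F] [IsOrderedRing F] [Algebra ℝ F]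
    [AddCommGroup V] [Module F V] (S : MetricWeakFStructure p F V) :
    (∀ X Y : V, S.g (S.f X) Y = -S.g X (S.f Y)) ∧
    (∀ X Y : V, S.g (S.Q X) Y = S.g X (S.Q Y)) := by
  refine ⟨?_, aux_Q_selfadj S⟩
  have key : ∀ X Y : V, S.g (S.f X) (S.Q Y) = -S.g X (S.f (S.Q Y)) := by
    intro X Y
    have h := S.compatible (S.f X) Y
    simp only [aux_eta_f, zero_mul, Finset.sum_const_zero, sub_zero] at h
    -- h : S.g (S.f (S.f X)) (S.f Y) = S.g (S.f X) (S.Q Y)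
    rw [S.f_squared X] at h
    have hlhs : S.g (-S.Q X + ∑ i, S.η i X • S.ξ i) (S.f Y)
        = -S.g (S.Q X) (S.f Y) := by
      rw [S.g_add_left, aux_g_neg_left]
      have : S.g (∑ i, S.η i X • S.ξ i) (S.f Y) = 0 := by
        rw [S.g_symm]
        calc S.g (S.f Y) (∑ i, S.η i X • S.ξ i)
            = ∑ i, S.η i X * S.g (S.f Y) (S.ξ i) := by
              induction (Finset.univ : Finset (Fin p)) using Finset.cons_induction with
              | empty => simp [aux_g_zero_right]
              | cons a s ha ih =>
                  rw [Finset.sum_cons, Finset.sum_cons, aux_g_add_right,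
                    aux_g_smul_right, ih]
          _ = 0 := by simp [aux_g_xi, aux_eta_f]
      rw [this, add_zero]
    rw [hlhs] at h
    rw [aux_fQ_comm]
    have h2 := aux_Q_selfadj S X (S.f Y)
    linear_combination -h - h2
  intro X Y
  obtain ⟨Z, rfl⟩ := S.Q_nonsingular.2 Y
  exact key X Z
end
end

section
/- Let a metric weak f-structure (f, Q, ξ_i, η^i, g) be normal, i.e., N^(1) = 0. Then the tensors N^(3)_i and N^(4)_{ij} vanish for all i, j; the tensor N^(2)_i is given by N^(2)_i(X, Y) = η^i([Q̃X^⊤, fY]) for all vector fields X, Y; and the characteristic distribution ker f is totally geodesic, i.e., ∇_{ξ_i} ξ_j + ∇_{ξ_j} ξ_i = 0 for all i, j. -/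
/-!
An algebraic model of the calculus of smooth vector fields on a smooth manifold
`M^{2n+p}`: `F` plays the role of the ordered commutative `ℝ`-algebra `C^∞(M)` of
smooth real-valued functions, and `V` the `F`-module `𝔛(M)` of smooth vector fields,
equipped with the derivation action `D` of vector fields on functions, the Lie
bracket of vector fields, a Riemannian metric `g` (a symmetric, `F`-bilinear,
positive-definite form) and its Levi-Civita connection `nabla` (the unique metric,
torsion-free affine connection of `g`).
-/

noncomputable section

namespace MetricWeakFStructure

variable {p : ℕ} {F V : Type*} [CommRing F] [PartialOrder F] [IsOrderedRing F] [Algebra ℝ F]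
  [AddCommGroup V] [Module F V] (S : MetricWeakFStructure p F V)

lemma D_zero' (X : V) : S.D X 0 = 0 := by
  have h := S.D_add_right X 0 0
  rw [add_zero] at h
  exact (left_eq_add.mp h)

lemma D_one' (X : V) : S.D X 1 = 0 := by
  have h := S.D_algebraMap X 1
  rwa [map_one] at h

lemma D_delta (X : V) (c : Prop) [Decidable c] :
    S.D X (if c then (1:F) else 0) = 0 := by
  split
  · exact S.D_one' X
  · exact S.D_zero' X

lemma bracket_zero_left (Z : V) : S.bracket 0 Z = 0 := by
  have h := S.bracket_add_left 0 0 Z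
  rw [add_zero] at h
  exact (left_eq_add.mp h)

lemma bracket_zero_right (Z : V) : S.bracket Z 0 = 0 := by
  rw [S.bracket_antisymm, S.bracket_zero_left, neg_zero]

lemma bracket_neg_left (X Y : V) : S.bracket (-X) Y = -S.bracket X Y := by
  have h := S.bracket_add_left X (-X) Y
  rw [add_neg_cancel, S.bracket_zero_left] at h
  have h2 := h.symm
  rw [add_comm] at h2
  exact eq_neg_of_add_eq_zero_left h2

lemma bracket_sub_left (X Y Z : V) :
    S.bracket (X - Y) Z = S.bracket X Z - S.bracket Y Z := by
  rw [sub_eq_add_neg, S.bracket_add_left, S.bracket_neg_left, sub_eq_add_neg]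

lemma bracket_smul_left (φ : F) (X Y : V) :
    S.bracket (φ • X) Y = φ • S.bracket X Y - S.D Y φ • X := by
  rw [S.bracket_antisymm, S.bracket_leibniz, S.bracket_antisymm Y X, smul_neg]
  abel

lemma bracket_sum_left {ι : Type*} (s : Finset ι) (v : ι → V) (Z : V) :
    S.bracket (∑ k ∈ s, v k) Z = ∑ k ∈ s, S.bracket (v k) Z := by
  classical
  induction s using Finset.cons_induction with
  | empty => simp [S.bracket_zero_left]
  | cons a s ha ih => rw [Finset.sum_cons, Finset.sum_cons, S.bracket_add_left, ih]

lemma g_zero_left (X : V) : S.g 0 X = 0 := by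
  have h := S.g_smul_left 0 0 X
  rwa [zero_smul, zero_mul] at h

lemma g_zero_right (X : V) : S.g X 0 = 0 := by
  rw [S.g_symm]; exact S.g_zero_left X

lemma eta_ff (i : Fin p) (X : V) : S.η i (S.f (S.f X)) = 0 := by
  rw [S.f_squared]
  simp [S.eta_Q, S.eta_xi, mul_ite]

lemma eta_f (i : Fin p) (X : V) : S.η i (S.f X) = 0 := by
  obtain ⟨Y, hY⟩ := S.Q_nonsingular.2 X
  have h := S.f_cubed Y
  have hfQ : S.f (S.Q Y) = -S.f (S.f (S.f Y)) := by
    rw [eq_neg_iff_add_eq_zero, add_comm]; exact h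
  rw [← hY, hfQ, map_neg, S.eta_ff, neg_zero]

lemma f_xi (j : Fin p) : S.f (S.ξ j) = 0 := by
  have h2 : S.f (S.f (S.ξ j)) = 0 := by
    rw [S.f_squared, S.Q_xi]
    simp [S.eta_xi, ite_smul]
  have h := S.f_cubed (S.ξ j)
  rwa [h2, map_zero, S.Q_xi, zero_add] at h

lemma g_eta (j : Fin p) (X : V) : S.g X (S.ξ j) = S.η j X := by
  have h := S.compatible X (S.ξ j)
  rw [S.f_xi, S.g_zero_right, S.Q_xi] at h
  have hs : ∑ i, S.η i X * S.η i (S.ξ j) = S.η j X := by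
    simp [S.eta_xi, mul_ite]
  rw [hs] at h
  exact (sub_eq_zero.mp h.symm)

lemma eta_bracket_ff (hN : S.Normal) (i : Fin p) (X Y : V) :
    S.η i (S.bracket (S.f X) (S.f Y)) =
      -S.D X (S.η i Y) + S.D Y (S.η i X) + S.η i (S.bracket X Y) := by
  have h := congrArg (S.η i) (hN X Y)
  simp only [N1, nijenhuis, dEta, map_add, map_sub, map_sum, map_smul, map_zero,
    S.eta_xi, smul_eq_mul, mul_ite, mul_one, mul_zero, Finset.sum_ite_eq,
    Finset.mem_univ, if_true, S.eta_ff, S.eta_f] at h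
  have h2 : (2:F) * algebraMap ℝ F (1/2) = 1 := by
    rw [show (2:F) = algebraMap ℝ F 2 from (map_ofNat _ 2).symm, ← map_mul]
    norm_num
  linear_combination h - (S.D X (S.η i Y) - S.D Y (S.η i X) - S.η i (S.bracket X Y)) * h2

lemma N4_zero (hN : S.Normal) (i j : Fin p) (X : V) : S.N4 i j X = 0 := by
  have h := S.eta_bracket_ff hN j (S.ξ i) X
  rw [S.f_xi, S.bracket_zero_left, map_zero, S.eta_xi, S.D_delta] at h
  simp only [N4, lieD_eta]
  linear_combination h

lemma eta_bracket_xi_f (hN : S.Normal) (i j : Fin p) (Y : V) :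
    S.η j (S.bracket (S.ξ i) (S.f Y)) = 0 := by
  have h := S.N4_zero hN i j (S.f Y)
  simp only [N4, lieD_eta, S.eta_f, S.D_zero'] at h
  linear_combination -h

lemma N3_zero (hN : S.Normal) (i : Fin p) (X : V) : S.N3 i X = 0 := by
  have hv := hN (S.ξ i) X
  have hc : ∀ j, (2 * S.dEta j (S.ξ i) X) = 0 := by
    intro j
    have h4 := S.N4_zero hN i j X
    simp only [N4, lieD_eta] at h4
    simp only [dEta, S.eta_xi, S.D_delta]
    linear_combination (2 * algebraMap ℝ F (1/2)) * h4
  simp only [N1, nijenhuis] at hv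
  rw [S.f_xi, S.bracket_zero_left, S.bracket_zero_left, map_zero] at hv
  simp only [hc, zero_smul, Finset.sum_const_zero, add_zero, sub_zero, zero_sub] at hv
  have hab : S.f (S.f (S.bracket (S.ξ i) X)) = S.f (S.bracket (S.ξ i) (S.f X)) :=
    sub_eq_zero.mp hv
  have hker : S.f (S.N3 i X) = 0 := by
    simp only [N3, lieD_f, map_sub]
    rw [hab, sub_self]
  have hmem := S.ker_f_spanned _ hker
  rw [Submodule.mem_span_range_iff_exists_fun] at hmem
  obtain ⟨c, hcc⟩ := hmem
  have heta : ∀ j, S.η j (S.N3 i X) = 0 := by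
    intro j
    simp only [N3, lieD_f, map_sub, S.eta_f, S.eta_bracket_xi_f hN, sub_zero]
  have hcj : ∀ j, c j = 0 := by
    intro j
    have h := congrArg (S.η j) hcc
    simp only [map_sum, map_smul, S.eta_xi, smul_eq_mul, mul_ite, mul_one, mul_zero,
      Finset.sum_ite_eq, Finset.sum_ite_eq', Finset.mem_univ, if_true] at h
    rw [h, heta j]
  rw [← hcc]
  simp [hcj]

lemma Qt_top (X : V) : S.Qt (S.top X) = S.Q X - X := by
  simp only [Qt, top, map_sub, map_sum, map_smul, S.Q_xi]
  abel

lemma eta_bracket_Q_f (hN : S.Normal) (i : Fin p) (X Y : V) :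
    S.η i (S.bracket (S.Q X) (S.f Y)) =
      S.D (S.f X) (S.η i Y) - S.η i (S.bracket (S.f X) Y) - S.D (S.f Y) (S.η i X) := by
  have hQX : S.Q X = (∑ j, S.η j X • S.ξ j) - S.f (S.f X) := by
    rw [S.f_squared]; abel
  rw [hQX, S.bracket_sub_left, map_sub, S.bracket_sum_left, map_sum]
  have key : ∀ j, S.η i (S.bracket (S.η j X • S.ξ j) (S.f Y))
      = if i = j then -(S.D (S.f Y) (S.η j X)) else 0 := by
    intro j
    rw [S.bracket_smul_left, map_sub, map_smul, map_smul, S.eta_bracket_xi_f hN,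
      S.eta_xi, smul_eq_mul, mul_zero, smul_eq_mul, zero_sub, mul_ite, mul_one, mul_zero]
    split <;> simp
  rw [Finset.sum_congr rfl (fun j _ => key j), Finset.sum_ite_eq]
  have hff := S.eta_bracket_ff hN i (S.f X) Y
  rw [S.eta_f, S.D_zero'] at hff
  rw [hff]
  simp only [Finset.mem_univ, if_true]
  ring

lemma N2_formula (hN : S.Normal) (i : Fin p) (X Y : V) :
    S.N2 i X Y = S.η i (S.bracket (S.Qt (S.top X)) (S.f Y)) := by
  rw [S.Qt_top, S.bracket_sub_left, map_sub, S.eta_bracket_Q_f hN]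
  simp only [N2, lieD_eta]
  rw [S.bracket_antisymm (S.f Y) X, map_neg]
  ring

lemma geodesic (hN : S.Normal) (i j : Fin p) :
    S.nabla (S.ξ i) (S.ξ j) + S.nabla (S.ξ j) (S.ξ i) = 0 := by
  have ge : ∀ (k : Fin p) (A : V), S.g (S.ξ k) A = S.η k A := fun k A => by
    rw [S.g_symm]; exact S.g_eta k A
  have hN4 : ∀ (a b : Fin p) (A : V),
      S.D (S.ξ a) (S.η b A) = S.η b (S.bracket (S.ξ a) A) := by
    intro a b A
    have h := S.N4_zero hN a b A
    simp only [N4, lieD_eta] at h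
    linear_combination h
  have key : ∀ Z, S.g (S.nabla (S.ξ i) (S.ξ j) + S.nabla (S.ξ j) (S.ξ i)) Z = 0 := by
    intro Z
    have h1' : S.η j (S.bracket (S.ξ i) Z)
        = S.g (S.nabla (S.ξ i) (S.ξ j)) Z + S.η j (S.nabla (S.ξ i) Z) := by
      rw [← hN4 i j Z, ← ge j (S.nabla (S.ξ i) Z), ← ge j Z]
      exact S.nabla_metric _ _ _
    have h2' : S.η i (S.bracket (S.ξ j) Z)
        = S.g (S.nabla (S.ξ j) (S.ξ i)) Z + S.η i (S.nabla (S.ξ j) Z) := by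
      rw [← hN4 j i Z, ← ge i (S.nabla (S.ξ j) Z), ← ge i Z]
      exact S.nabla_metric _ _ _
    have h3' : (0:F) = S.η j (S.nabla Z (S.ξ i)) + S.η i (S.nabla Z (S.ξ j)) := by
      have h3 := S.nabla_metric Z (S.ξ i) (S.ξ j)
      rw [ge i (S.ξ j), S.eta_xi, S.D_delta, S.g_eta, ge i] at h3
      exact h3
    have ht1 : S.η j (S.nabla (S.ξ i) Z) - S.η j (S.nabla Z (S.ξ i))
        = S.η j (S.bracket (S.ξ i) Z) := by
      rw [← map_sub, S.nabla_torsion_free]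
    have ht2 : S.η i (S.nabla (S.ξ j) Z) - S.η i (S.nabla Z (S.ξ j))
        = S.η i (S.bracket (S.ξ j) Z) := by
      rw [← map_sub, S.nabla_torsion_free]
    rw [S.g_add_left]
    linear_combination -h1' - h2' - ht1 - ht2 + h3'
  exact S.g_definite _ (key _)

end MetricWeakFStructure

open MetricWeakFStructure

/-- If a metric weak `f`-structure is normal (`N⁽¹⁾ = 0`), then
`N⁽³⁾ᵢ` and `N⁽⁴⁾ᵢⱼ` vanish, `N⁽²⁾ᵢ(X,Y) = ηⁱ([Q̃X^⊤, fY])`, and the characteristic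
distribution `ker f` is totally geodesic: `∇_{ξᵢ} ξⱼ + ∇_{ξⱼ} ξᵢ = 0`. -/
theorem statement_2 {p : ℕ} {F V : Type*} [CommRing F] [PartialOrder F] [IsOrderedRing F] [Algebra ℝ F]
    [AddCommGroup V] [Module F V] (S : MetricWeakFStructure p F V)
    (hN : S.Normal) :
    (∀ (i : Fin p) (X : V), S.N3 i X = 0) ∧
    (∀ (i j : Fin p) (X : V), S.N4 i j X = 0) ∧
    (∀ (i : Fin p) (X Y : V),
      S.N2 i X Y = S.η i (S.bracket (S.Qt (S.top X)) (S.f Y))) ∧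
    (∀ i j : Fin p, S.nabla (S.ξ i) (S.ξ j) + S.nabla (S.ξ j) (S.ξ i) = 0) := by
  exact ⟨fun i X => S.N3_zero hN i X, fun i j X => S.N4_zero hN i j X,
    fun i X Y => S.N2_formula hN i X Y, fun i j => S.geodesic hN i j⟩
end
end
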